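/- arXiv:2503.00446 — 2 statements merged into one kernel-verified Lean document; each statement's English description precedes it below -/
import Mathlib

section
/- Let g : ℝ^n_{≥0} → ℝ be a function whose partial derivatives ∂g/∂R_k exist and are continuous on ℝ^n_{≥0} (one-sided at boundary points), such that g(R) = 0 whenever R_j = 0, and such that ∂g/∂R_k(R) = 0 whenever R_k = 0 for each k ≠ j. Then the function f̂ : ℝ^n → ℝ defined by f̂(u) = sign(u_j) · g(|u_1|, ..., |u_n|) is C^1 on ℝ^n. -/
/-!
Along the `k`-th coordinate line through `u` the function is `t ↦ sign t · φ |t|` if `k = j` and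
`t ↦ sign u_j · φ |t|` if `k ≠ j`, where `φ s = g(|u_1|, …, s, …, |u_n|)`. The odd extension is
differentiable at `t = 0` because `φ 0 = 0`, the even one because `φ'(0) = 0`. So the partial
derivatives exist everywhere and equal `∂_j g(|u|)` and `sign u_j · sign u_k · ∂_k g(|u|)`. The
latter is continuous across `{u_k = 0}` and `{u_j = 0}` because `∂_k g` vanishes on both faces
(on `{R_j = 0}` since `g` does), and continuous partial derivatives give a `C¹` function.
-/

open Set Filter Topology

section PartialDerivatives

variable {𝕜 E : Type*} [RCLike 𝕜] [NormedAddCommGroup E] [NormedSpace 𝕜 E]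

theorem Continuous.sum_smulRight_proj {ι X : Type*} [Fintype ι] [TopologicalSpace X]
    {q : ι → X → E} (hq : ∀ k, Continuous (q k)) :
    Continuous fun x =>
      ∑ k, (ContinuousLinearMap.proj (R := 𝕜) (φ := fun _ : ι => 𝕜) k).smulRight (q k x) :=
  continuous_finsetSum _ fun k _ =>
    (ContinuousLinearMap.smulRightL 𝕜 (ι → 𝕜) E (ContinuousLinearMap.proj k)).continuous.comp
      (hq k)

theorem hasStrictFDerivAt_of_hasDerivAt_update {n : ℕ} {F : (Fin n → 𝕜) → E}
    {q : Fin n → (Fin n → 𝕜) → E}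
    (hF : ∀ k x, HasDerivAt (fun t => F (Function.update x k t)) (q k x) (x k))
    (hq : ∀ k, Continuous (q k)) (x : Fin n → 𝕜) :
    HasStrictFDerivAt F (∑ k, (ContinuousLinearMap.proj (R := 𝕜) k).smulRight (q k x)) x := by
  induction n with
  | zero =>
    have : F = fun _ => F x := funext fun y => congrArg F (Subsingleton.elim y x)
    rw [this]
    simpa using hasStrictFDerivAt_const (F x) x
  | succ n ih =>
    set G : 𝕜 → (Fin n → 𝕜) → E := fun a y => F (Fin.cons a y)
    have hG₁ : ∀ a y,
        HasFDerivAt (G · y) (ContinuousLinearMap.toSpanSingleton 𝕜 (q 0 (Fin.cons a y))) a := by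
      intro a y
      simpa only [G, Fin.update_cons_zero, Fin.cons_zero] using (hF 0 (Fin.cons a y)).hasFDerivAt
    have hG₂ : ∀ a y, HasFDerivAt (G a) (∑ k, (ContinuousLinearMap.proj (R := 𝕜) k).smulRight
        (q k.succ (Fin.cons a y))) y := by
      intro a y
      refine (ih (F := G a) (q := fun k y => q k.succ (Fin.cons a y)) (fun k y => ?_)
        (fun k => ?_) y).hasFDerivAt
      · simpa only [G, Fin.cons_update, Fin.cons_succ] using hF k.succ (Fin.cons a y)
      · fun_prop
    have hstrict := hasStrictFDerivAt_uncurry_coprod (u := (x 0, Fin.tail x)) (f := G)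
      (f₁ := fun a y => ContinuousLinearMap.toSpanSingleton 𝕜 (q 0 (Fin.cons a y)))
      (f₂ := fun a y => ∑ k,
        (ContinuousLinearMap.proj (R := 𝕜) (φ := fun _ : Fin n => 𝕜) k).smulRight
          (q k.succ (Fin.cons a y)))
      (Eventually.of_forall fun v => hG₁ v.1 v.2) (Eventually.of_forall fun v => hG₂ v.1 v.2)
      ((ContinuousLinearMap.smulRightL 𝕜 𝕜 E (.id 𝕜 𝕜)).continuous.comp
        (by fun_prop)).continuousAt
      (Continuous.sum_smulRight_proj fun k => by fun_prop).continuousAt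
    have hcomp := hstrict.comp x (Fin.consEquivL 𝕜 (fun _ => 𝕜)).symm.hasStrictFDerivAt
    have hFG : (fun y => ↿G ((Fin.consEquivL 𝕜 (fun _ => 𝕜)).symm y)) = F := by
      funext y
      exact congrArg F (Fin.cons_self_tail y)
    rw [hFG] at hcomp
    refine hcomp.congr_fderiv ?_
    ext v
    simp [Function.HasUncurry.uncurry, Fin.sum_univ_succ, Fin.tail]

theorem contDiff_one_of_hasDerivAt_update {n : ℕ} {F : (Fin n → 𝕜) → E}
    {q : Fin n → (Fin n → 𝕜) → E}
    (hF : ∀ k x, HasDerivAt (fun t => F (Function.update x k t)) (q k x) (x k))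
    (hq : ∀ k, Continuous (q k)) : ContDiff 𝕜 1 F :=
  contDiff_one_iff_hasFDerivAt.2 ⟨_, Continuous.sum_smulRight_proj hq,
    fun x => (hasStrictFDerivAt_of_hasDerivAt_update hF hq x).hasFDerivAt⟩

end PartialDerivatives

theorem Real.eventually_sign_eq {t : ℝ} (ht : t ≠ 0) : ∀ᶠ s in 𝓝 t, Real.sign s = Real.sign t := by
  rcases ht.lt_or_gt with ht | ht
  · filter_upwards [Iio_mem_nhds ht] with s hs using by
      rw [Real.sign_of_neg hs, Real.sign_of_neg ht]
  · filter_upwards [Ioi_mem_nhds ht] with s hs using by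
      rw [Real.sign_of_pos hs, Real.sign_of_pos ht]

section OneVariable

variable {F : Type*} [NormedAddCommGroup F] [NormedSpace ℝ F] {φ f : ℝ → F} {d : F} {t x : ℝ}

theorem HasDerivWithinAt.hasDerivAt_of_comp_neg (hr : HasDerivWithinAt f d (Ici x) x)
    (hl : HasDerivWithinAt (fun s => f (-s)) (-d) (Ici (-x)) (-x)) : HasDerivAt f d x := by
  have hl' := hl.scomp x (hasDerivAt_neg x).hasDerivWithinAt (s := Iic x)
    fun s hs => neg_le_neg (mem_Iic.1 hs)
  simp only [Function.comp_def, neg_neg, neg_one_smul] at hl'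
  simpa [Ici_union_Iic] using hr.union hl'

theorem HasDerivWithinAt.hasDerivAt_comp_abs_of_ne_zero (h : HasDerivWithinAt φ d (Ici 0) |t|)
    (ht : t ≠ 0) : HasDerivAt (fun s => φ |s|) (Real.sign t • d) t := by
  have hφ : HasDerivAt φ d |t| := h.hasDerivAt (Ici_mem_nhds (abs_pos.2 ht))
  rcases ht.lt_or_gt with ht | ht
  · simpa [Real.sign_of_neg ht, Function.comp_def] using hφ.scomp t (hasDerivAt_abs_neg ht)
  · simpa [Real.sign_of_pos ht, Function.comp_def] using hφ.scomp t (hasDerivAt_abs_pos ht)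

theorem HasDerivWithinAt.hasDerivAt_comp_abs (h : HasDerivWithinAt φ d (Ici 0) |t|)
    (h0 : t = 0 → d = 0) : HasDerivAt (fun s => φ |s|) (Real.sign t • d) t := by
  rcases eq_or_ne t 0 with rfl | ht
  · rw [abs_zero] at h
    have hr : HasDerivWithinAt (fun s => φ |s|) 0 (Ici 0) 0 :=
      (h0 rfl ▸ h).congr (fun s hs => by rw [abs_of_nonneg hs]) (by rw [abs_zero])
    simpa using hr.hasDerivAt_of_comp_neg (by simpa using hr)
  · exact h.hasDerivAt_comp_abs_of_ne_zero ht

theorem HasDerivWithinAt.hasDerivAt_sign_smul_comp_abs (h : HasDerivWithinAt φ d (Ici 0) |t|)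
    (h0 : t = 0 → φ 0 = 0) : HasDerivAt (fun s => Real.sign s • φ |s|) d t := by
  rcases eq_or_ne t 0 with rfl | ht
  · rw [abs_zero] at h
    have hsign : ∀ s ∈ Ici (0 : ℝ), Real.sign s • φ |s| = φ s := by
      intro s hs
      rcases (mem_Ici.1 hs).lt_or_eq with hs | rfl
      · rw [Real.sign_of_pos hs, one_smul, abs_of_pos hs]
      · simp [h0 rfl]
    have hr := h.congr hsign (hsign 0 self_mem_Ici)
    exact hr.hasDerivAt_of_comp_neg (by simpa [Real.sign_neg, abs_neg, Pi.neg_def] using hr.neg)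
  · have hsq : Real.sign t * Real.sign t = 1 := by
      rcases Real.sign_apply_eq_of_ne_zero t ht with h | h <;> simp [h]
    have := (h.hasDerivAt_comp_abs_of_ne_zero ht).const_smul (Real.sign t)
    rw [smul_smul, hsq, one_smul] at this
    exact this.congr_of_eventuallyEq
      (by filter_upwards [Real.eventually_sign_eq ht] with s hs using by rw [hs]; rfl)

end OneVariable

theorem Continuous.sign_mul {X : Type*} [TopologicalSpace X] {s f : X → ℝ} (hs : Continuous s)
    (hf : Continuous f) (h : ∀ x, s x = 0 → f x = 0) :
    Continuous fun x => Real.sign (s x) * f x := by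
  refine continuous_iff_continuousAt.2 fun x => ?_
  rcases eq_or_ne (s x) 0 with hx | hx
  · have hbdd : IsBoundedUnder (· ≤ ·) (𝓝 x) ((‖·‖) ∘ fun y => Real.sign (s y)) :=
      isBoundedUnder_of ⟨1, fun y => by
        rcases Real.sign_apply_eq (s y) with h | h | h <;> simp [h]⟩
    have := isBoundedUnder_le_mul_tendsto_zero hbdd (h x hx ▸ hf.tendsto x)
    simpa [ContinuousAt, hx] using this
  · exact (hf.const_mul (Real.sign (s x))).continuousAt.congr (by
      filter_upwards [hs.continuousAt.eventually (Real.eventually_sign_eq hx)] with y hy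
        using by rw [hy])

section SignExtension

variable {ι : Type*} [DecidableEq ι] {g : (ι → ℝ) → ℝ} {j k : ι}

theorem HasDerivWithinAt.eq_zero_of_update_face {R : ι → ℝ} {d : ℝ}
    (h : HasDerivWithinAt (fun t => g (Function.update R k t)) d (Ici 0) (R k)) (hR : 0 ≤ R)
    (hRj : R j = 0) (hk : k ≠ j) (hzero : ∀ R, 0 ≤ R → R j = 0 → g R = 0) : d = 0 := by
  have hslice : EqOn (fun t => g (Function.update R k t)) 0 (Ici 0) := fun t ht =>
    hzero _ (le_update_iff.2 ⟨ht, fun i _ => hR i⟩) (by rwa [Function.update_of_ne hk.symm])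
  exact (uniqueDiffOn_Ici 0 _ (hR k)).eq_deriv _ h
    ((hasDerivWithinAt_const _ _ 0).congr hslice (hslice (hR k)))

theorem hasDerivAt_sign_mul_comp_abs_update (u : ι → ℝ) {d : ℝ}
    (h : HasDerivWithinAt (fun s => g (Function.update (fun i => |u i|) k s)) d (Ici 0) |u k|)
    (hj : k = j → u j = 0 → g (Function.update (fun i => |u i|) j 0) = 0)
    (hk : k ≠ j → u k = 0 → d = 0) :
    HasDerivAt
      (fun t => Real.sign (Function.update u k t j) * g (fun i => |Function.update u k t i|))
      (if k = j then d else Real.sign (u j) * (Real.sign (u k) * d)) (u k) := by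
  simp only [show ∀ t, (fun i => |Function.update u k t i|) =
    Function.update (fun i => |u i|) k |t| from Function.comp_update (|·|) u k]
  rcases eq_or_ne k j with rfl | hkj
  · simp only [if_true, Function.update_self]
    exact h.hasDerivAt_sign_smul_comp_abs (hj rfl)
  · simp only [if_neg hkj, Function.update_of_ne hkj.symm]
    exact (h.hasDerivAt_comp_abs (hk hkj)).const_mul (Real.sign (u j))

end SignExtension

theorem sign_extension_C1_general (n : ℕ) (j : Fin n)
    (g : (Fin n → ℝ) → ℝ) (pg : Fin n → (Fin n → ℝ) → ℝ)
    (O : Set (Fin n → ℝ)) (hO : O = {R : Fin n → ℝ | ∀ k, 0 ≤ R k})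
    (hderiv : ∀ k : Fin n, ∀ R ∈ O,
      HasDerivWithinAt (fun t : ℝ => g (Function.update R k t)) (pg k R)
        (Ici 0) (R k))
    (hpgcont : ∀ k : Fin n, ContinuousOn (pg k) O)
    (hzero : ∀ R ∈ O, R j = 0 → g R = 0)
    (hvanish : ∀ k : Fin n, k ≠ j → ∀ R ∈ O, R k = 0 → pg k R = 0) :
    ContDiff ℝ 1 (fun u : Fin n → ℝ => Real.sign (u j) * g (fun k => |u k|)) := by
  subst hO
  have habs : ∀ u : Fin n → ℝ, (fun i => |u i|) ∈ {R : Fin n → ℝ | ∀ k, 0 ≤ R k} :=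
    fun u i => abs_nonneg (u i)
  have hpg_face : ∀ k ≠ j, ∀ u : Fin n → ℝ, u j = 0 → pg k (fun i => |u i|) = 0 :=
    fun k hk u hu =>
      (hderiv k _ (habs u)).eq_zero_of_update_face (habs u) (by simp [hu]) hk hzero
  have hpg_cont : ∀ k, Continuous fun u : Fin n → ℝ => pg k (fun i => |u i|) := fun k =>
    (hpgcont k).comp_continuous (continuous_pi fun i => (continuous_apply i).abs) habs
  refine contDiff_one_of_hasDerivAt_update (fun k u => hasDerivAt_sign_mul_comp_abs_update u
    (hderiv k _ (habs u))
    (fun _ _ => hzero _ (le_update_iff.2 ⟨le_rfl, fun i _ => abs_nonneg (u i)⟩) (by simp))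
    fun hk hu => hvanish k hk _ (habs u) (by simp [hu])) fun k => ?_
  rcases eq_or_ne k j with rfl | hk
  · simpa using hpg_cont k
  · simp only [if_neg hk]
    refine (continuous_apply j).sign_mul ((continuous_apply k).sign_mul (hpg_cont k)
      fun u hu => hvanish k hk _ (habs u) (by simp [hu])) fun u hu => ?_
    rw [hpg_face k hk u hu, mul_zero]

/-- If `g` on the nonnegative orthant has continuous (one-sided at the boundary)
partial derivatives, vanishes on `{R_j = 0}`, and `∂g/∂R_k` vanishes on
`{R_k = 0}` for `k ≠ j`, then `u ↦ sign(u_j)·g(|u_1|,…,|u_n|)` is `C¹` on `ℝⁿ`. -/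
theorem sign_extension_C1 (n : ℕ) (j : Fin n)
    (g : (Fin n → ℝ) → ℝ) (pg : Fin n → (Fin n → ℝ) → ℝ)
    (O : Set (Fin n → ℝ)) (hO : O = {R : Fin n → ℝ | ∀ k, 0 ≤ R k})
    (hgcont : ContinuousOn g O)
    (hderiv : ∀ k : Fin n, ∀ R ∈ O,
      HasDerivWithinAt (fun t : ℝ => g (Function.update R k t)) (pg k R)
        (Ici 0) (R k))
    (hpgcont : ∀ k : Fin n, ContinuousOn (pg k) O)
    (hzero : ∀ R ∈ O, R j = 0 → g R = 0)
    (hvanish : ∀ k : Fin n, k ≠ j → ∀ R ∈ O, R k = 0 → pg k R = 0) :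
    ContDiff ℝ 1 (fun u : Fin n → ℝ => Real.sign (u j) * g (fun k => |u k|)) :=
  sign_extension_C1_general n j g pg O hO hderiv hpgcont hzero hvanish
end

section
/- Let f : ℂ → ℂ be S^1-equivariant (f(e^{iφ}z) = e^{iφ}f(z)) and C^1 as a real map on a neighbourhood of 0, with f(0) = 0 and df(0) invertible. Write f(R) = g(R)e^{iψ(R)} for real R > 0, with g(R) = |f(R)| > 0. Then g(R) · ψ'(R) → 0 and g'(R) → |∂f/∂u(0)| as R → 0⁺, where u = Re(z). -/
/-!
On the positive real axis `f(R) = g(R) e^{iψ(R)}` differentiates to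
`df(R) 1 = (g' + i g ψ') e^{iψ}`. Both `df(R) 1` and the difference quotient
`f(R) / R = (g(R) / R) e^{iψ(R)}` tend to `a = df(0) 1`, which forces the phase `e^{iψ(R)}`
to line up with `a`; dividing, `g' + i g ψ' → |a|`, and the two limits are its real and
imaginary parts.
-/

open Set Filter Topology Complex

theorem HasFDerivAt.hasDerivAt_comp_ofReal {F : Type*} [NormedAddCommGroup F] [NormedSpace ℝ F]
    {f : ℂ → F} {f' : ℂ →L[ℝ] F} {x : ℝ} (hf : HasFDerivAt f f' (x : ℂ)) :
    HasDerivAt (fun t : ℝ => f t) (f' 1) x := by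
  simpa [Function.comp_def] using hf.comp_hasDerivAt x (hasDerivAt_id x).ofReal_comp

theorem ContDiffAt.eventually_hasDerivAt_ofReal {F : Type*} [NormedAddCommGroup F]
    [NormedSpace ℝ F] {f : ℂ → F} {x : ℝ} (hf : ContDiffAt ℝ 1 f (x : ℂ)) :
    ∀ᶠ t : ℝ in 𝓝 x, HasDerivAt (fun t : ℝ => f t) (fderiv ℝ f t 1) t := by
  filter_upwards [continuous_ofReal.continuousAt.eventually (hf.eventually (by simp))] with t ht
  exact (ht.differentiableAt one_ne_zero).hasFDerivAt.hasDerivAt_comp_ofReal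

theorem ContDiffAt.tendsto_fderiv_ofReal_one {F : Type*} [NormedAddCommGroup F]
    [NormedSpace ℝ F] {f : ℂ → F} {x : ℝ} (hf : ContDiffAt ℝ 1 f (x : ℂ)) :
    Tendsto (fun t : ℝ => fderiv ℝ f t 1) (𝓝 x) (𝓝 (fderiv ℝ f x 1)) :=
  ((hf.continuousAt_fderiv one_ne_zero).comp continuous_ofReal.continuousAt).clm_apply
    continuousAt_const

theorem HasDerivAt.ofReal_mul_cexp_mul_I {g ψ : ℝ → ℝ} {g' ψ' R : ℝ}
    (hg : HasDerivAt g g' R) (hψ : HasDerivAt ψ ψ' R) :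
    HasDerivAt (fun t => (g t : ℂ) * Complex.exp (ψ t * I))
      ((g' + g R * ψ' * I) * Complex.exp (ψ R * I)) R :=
  (hg.ofReal_comp.fun_mul (hψ.ofReal_comp.mul_const I).cexp).congr_deriv (by ring)

theorem tendsto_div_of_polar {α : Type*} {l : Filter α} {z w e : α → ℂ} {a : ℂ}
    (hz : Tendsto z l (𝓝 a)) (hw : Tendsto w l (𝓝 a))
    (hpolar : ∀ᶠ x in l, z x = ‖z x‖ * e x) (he : ∀ x, ‖e x‖ = 1) :
    Tendsto (fun x => w x / e x) l (𝓝 ‖a‖) := by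
  rw [tendsto_iff_norm_sub_tendsto_zero] at hz hw ⊢
  refine squeeze_zero' (.of_forall fun _ => norm_nonneg _) ?_
    (by simpa using hw.add (hz.const_mul 2))
  filter_upwards [hpolar] with x hx
  have he0 : e x ≠ 0 := norm_ne_zero_iff.mp (by simp [he x])
  have hsplit :
      w x / e x - ‖a‖ = ((w x - a) + (a - z x) + (‖z x‖ - ‖a‖ : ℝ) * e x) / e x := by
    field_simp
    push_cast
    linear_combination hx
  calc ‖w x / e x - ‖a‖‖
      ≤ ‖w x - a‖ + ‖a - z x‖ + |‖z x‖ - ‖a‖| := by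
        rw [hsplit, norm_div, he x, div_one]
        refine (norm_add_le _ _).trans (add_le_add (norm_add_le _ _) ?_)
        rw [norm_mul, he x, mul_one, norm_real, Real.norm_eq_abs]
    _ ≤ ‖w x - a‖ + 2 * ‖z x - a‖ := by
        rw [norm_sub_rev a]
        linarith [abs_norm_sub_norm_le (z x) a]

theorem polar_derivative_limits_general (f : ℂ → ℂ)
    (hf : ContDiffAt ℝ 1 f 0) (hf0 : f 0 = 0)
    (ε : ℝ) (hε : 0 < ε)
    (g ψ g' ψ' : ℝ → ℝ)
    (hgabs : ∀ R ∈ Ioo (0 : ℝ) ε, g R = ‖f R‖)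
    (hpolar : ∀ R ∈ Ioo (0 : ℝ) ε,
      f R = (g R : ℂ) * Complex.exp (ψ R * Complex.I))
    (hg' : ∀ R ∈ Ioo (0 : ℝ) ε, HasDerivAt g (g' R) R)
    (hψ' : ∀ R ∈ Ioo (0 : ℝ) ε, HasDerivAt ψ (ψ' R) R) :
    Tendsto (fun R => g R * ψ' R) (nhdsWithin 0 (Ioi 0)) (nhds 0) ∧
      Tendsto g' (nhdsWithin 0 (Ioi 0)) (nhds ‖fderiv ℝ f 0 1‖) := by
  have hf : ContDiffAt ℝ 1 f ((0 : ℝ) : ℂ) := by rwa [ofReal_zero]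
  have hderiv := hf.eventually_hasDerivAt_ofReal
  have hslope : Tendsto (fun R : ℝ => f R / R) (𝓝[>] 0) (𝓝 (fderiv ℝ f 0 1)) := by
    simpa [hf0, div_eq_inv_mul] using hderiv.self_of_nhds.tendsto_slope_zero_right
  have hIoo : ∀ᶠ R in 𝓝[>] (0 : ℝ), R ∈ Ioo 0 ε := Ioo_mem_nhdsGT hε
  have hphase : Tendsto (fun R : ℝ => fderiv ℝ f R 1 / Complex.exp (ψ R * I)) (𝓝[>] 0)
      (𝓝 ‖fderiv ℝ f 0 1‖) := by
    refine tendsto_div_of_polar hslope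
      (hf.tendsto_fderiv_ofReal_one.mono_left nhdsWithin_le_nhds) ?_ fun R => by simp
    filter_upwards [hIoo] with R hR
    rw [norm_div, ← hgabs R hR, norm_real, Real.norm_eq_abs, abs_of_pos hR.1, hpolar R hR]
    push_cast
    ring
  have hpolar_deriv : ∀ᶠ R : ℝ in 𝓝[>] 0,
      fderiv ℝ f R 1 / Complex.exp (ψ R * I) = g' R + g R * ψ' R * I := by
    filter_upwards [hIoo, nhdsWithin_le_nhds hderiv] with R hR hfR
    have := ((hg' R hR).ofReal_mul_cexp_mul_I (hψ' R hR)).congr_of_eventuallyEq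
      (eventually_of_mem (Ioo_mem_nhds hR.1 hR.2) hpolar)
    rw [hfR.unique this, mul_div_cancel_right₀ _ (exp_ne_zero _)]
  have hlim := hphase.congr' hpolar_deriv
  exact ⟨by simpa [Function.comp_def] using (continuous_im.tendsto _).comp hlim,
    by simpa [Function.comp_def] using (continuous_re.tendsto _).comp hlim⟩

/-- For an `S¹`-equivariant `C¹` map `f : ℂ → ℂ` with `f(0) = 0` and invertible
differential at `0`, writing `f(R) = g(R)·e^{iψ(R)}` in polar form for small real
`R > 0`, one has `g(R)·ψ'(R) → 0` and `g'(R) → |∂f/∂u(0)|` as `R → 0⁺`. -/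
theorem polar_derivative_limits (f : ℂ → ℂ)
    (hequiv : ∀ φ : ℝ, ∀ z : ℂ,
      f (Complex.exp (φ * Complex.I) * z) = Complex.exp (φ * Complex.I) * f z)
    (hf : ContDiffAt ℝ 1 f 0) (hf0 : f 0 = 0)
    (hinv : ∀ w : ℂ, fderiv ℝ f 0 w = 0 → w = 0)
    (ε : ℝ) (hε : 0 < ε)
    (g ψ g' ψ' : ℝ → ℝ)
    (hgpos : ∀ R ∈ Ioo (0 : ℝ) ε, 0 < g R)
    (hgabs : ∀ R ∈ Ioo (0 : ℝ) ε, g R = ‖f R‖)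
    (hpolar : ∀ R ∈ Ioo (0 : ℝ) ε,
      f R = (g R : ℂ) * Complex.exp (ψ R * Complex.I))
    (hg' : ∀ R ∈ Ioo (0 : ℝ) ε, HasDerivAt g (g' R) R)
    (hψ' : ∀ R ∈ Ioo (0 : ℝ) ε, HasDerivAt ψ (ψ' R) R) :
    Tendsto (fun R => g R * ψ' R) (nhdsWithin 0 (Ioi 0)) (nhds 0) ∧
      Tendsto g' (nhdsWithin 0 (Ioi 0)) (nhds ‖fderiv ℝ f 0 1‖) :=
  polar_derivative_limits_general f hf hf0 ε hε g ψ g' ψ' hgabs hpolar hg' hψ'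
end
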